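/- For λ > −1, t ∈ ℝ and integer m ≥ 2, let P_n be the monic orthogonal polynomials of the generalised higher order Freud weight ω(x;t,λ), with recurrence coefficients β_n and norms h_n = ∫ P_n² ω dx. Define V_n^{(2m)} = (1/h_{n−2}) ∫_{−∞}^{∞} x^{2m−2} P_{n−2}(x) P_n(x) ω(x;t,λ) dx + (β_n/h_n) ∫_{−∞}^{∞} x^{2m−2} P_n(x)² ω(x;t,λ) dx. Then for all n ≥ 1 the discrete string equation holds: 2m V_n^{(2m)} − 2 t β_n = n + (λ + 1/2)(1 − (−1)ⁿ). -/

import Mathlib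

/-!
Write `Q = P_n P_{n-1} = x R`: one of `n`, `n - 1` is odd, and the odd-index `P_k` vanish at `0`.
Since `ω'/ω = (2λ+1)/x + 2tx - 2m x^(2m-1)`, integrating `(Q ω)'` over both half-lines gives
`∫ (Q' + (2λ+1) R + (2tx - 2m x^(2m-1)) Q) ω = 0`; the boundary terms vanish at `0` because
`Q ω = O(|x|^(2λ+2))` with `λ > -1`, and at `±∞` because `m ≥ 2`. Orthogonality evaluates the
four terms: `∫ Q' ω = n h_{n-1}`, `∫ x Q ω = β_n h_{n-1}`, `∫ x^(2m-1) Q ω = h_{n-1} V_n` (from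
`x P_{n-1} = P_n + β_{n-1} P_{n-2}` and `h_n = β_n h_{n-1}`), and
`2 ∫ R ω = (1 - (-1)^n) h_{n-1}` by induction on `n`.
-/

open MeasureTheory Real Polynomial

/-- The generalised higher order Freud weight `ω(x;t,λ) = |x|^{2λ+1} exp(t x² − x^{2m})`. -/
noncomputable def freudWeight (m : ℕ) (lam t x : ℝ) : ℝ :=
  |x| ^ (2 * lam + 1) * Real.exp (t * x ^ 2 - x ^ (2 * m))

open Filter Set Topology

noncomputable def momentFunctional (w : ℝ → ℝ)
    (hw : ∀ p : ℝ[X], Integrable fun x => p.eval x * w x) : ℝ[X] →ₗ[ℝ] ℝ where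
  toFun p := ∫ x, p.eval x * w x
  map_add' p q := by simp only [eval_add, add_mul]; exact integral_add (hw p) (hw q)
  map_smul' c p := by
    simp only [eval_smul, smul_eq_mul, mul_assoc, RingHom.id_apply]; exact integral_const_mul c _

section MomentFunctional

variable {w : ℝ → ℝ} (hw : ∀ p : ℝ[X], Integrable fun x => p.eval x * w x)

theorem momentFunctional_apply (p : ℝ[X]) : momentFunctional w hw p = ∫ x, p.eval x * w x := rfl

theorem momentFunctional_X_pow_of_odd (hw_even : ∀ x, w (-x) = w x) {k : ℕ} (hk : Odd k) :
    momentFunctional w hw (X ^ k) = 0 := by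
  have h := integral_neg_eq_self (fun x => x ^ k * w x) volume
  simp only [hk.neg_pow, hw_even, neg_mul, integral_neg] at h
  simp only [momentFunctional_apply, eval_pow, eval_X]
  linarith

theorem momentFunctional_sq_pos (hw_nonneg : ∀ x, 0 ≤ w x) (hw_pos : ∀ᵐ x, 0 < w x)
    {p : ℝ[X]} (hp : p ≠ 0) : 0 < momentFunctional w hw (p ^ 2) := by
  have hsupp : ∀ᵐ x, (p ^ 2).eval x * w x ≠ 0 := by
    filter_upwards [hw_pos, (finite_setOfPred_isRoot hp).countable.ae_notMem volume]
      with x hx hroot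
    exact mul_ne_zero (by simpa using hroot) hx.ne'
  rw [momentFunctional_apply, integral_pos_iff_support_of_nonneg
    (fun x => mul_nonneg (by simp [sq_nonneg]) (hw_nonneg x)) (hw _), pos_iff_ne_zero]
  intro h0
  obtain ⟨x, hx, hx'⟩ := (hsupp.and (measure_eq_zero_iff_ae_notMem.1 h0)).exists
  exact hx' hx

end MomentFunctional

structure IsMonicOrthogonal (L : ℝ[X] →ₗ[ℝ] ℝ) (P : ℕ → ℝ[X]) : Prop where
  monic : ∀ n, (P n).Monic
  natDegree_eq : ∀ n, (P n).natDegree = n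
  orthogonal : ∀ j k, j ≠ k → L (P j * P k) = 0

namespace IsMonicOrthogonal

variable {L : ℝ[X] →ₗ[ℝ] ℝ} {P : ℕ → ℝ[X]} (hP : IsMonicOrthogonal L P)
include hP

theorem degree_eq (n : ℕ) : (P n).degree = n := by
  rw [degree_eq_natDegree (hP.monic n).ne_zero, hP.natDegree_eq n]

theorem map_mul_eq_zero {n : ℕ} (q : ℝ[X]) (hq : q.degree < n) : L (q * P n) = 0 := by
  induction q using degree_lt_wf.induction with
  | _ q ih =>
  rcases eq_or_ne q 0 with rfl | hq0
  · simp
  set d := q.natDegree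
  have hlead : (C q.leadingCoeff * P d).degree = q.degree := by
    rw [degree_C_mul (leadingCoeff_ne_zero.2 hq0), hP.degree_eq, degree_eq_natDegree hq0]
  have hlt : (q - C q.leadingCoeff * P d).degree < q.degree :=
    degree_sub_lt_left hlead.symm hq0 (by simp [(hP.monic d).leadingCoeff])
  have hdn : d ≠ n := by
    rintro rfl
    exact (lt_irrefl _) (hq.trans_eq (degree_eq_natDegree hq0).symm)
  have hsplit :
      q * P n = (q - C q.leadingCoeff * P d) * P n + q.leadingCoeff • (P d * P n) := by
    rw [smul_eq_C_mul]; ring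
  rw [hsplit, map_add, map_smul, ih _ hlt (hlt.trans hq), hP.orthogonal d n hdn, smul_zero,
    add_zero]

theorem map_sq_eq_map_X_mul {n : ℕ} (hn : 1 ≤ n) :
    L (P n ^ 2) = L (X * (P n * P (n - 1))) := by
  have hXP : (P n).degree = (X * P (n - 1)).degree := by
    rw [degree_mul, degree_X, hP.degree_eq, hP.degree_eq]; norm_cast; omega
  have hlt := degree_sub_lt_left hXP (hP.monic n).ne_zero
    (by rw [(hP.monic n).leadingCoeff, leadingCoeff_mul, leadingCoeff_X,
      (hP.monic _).leadingCoeff, one_mul])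
  have h0 := hP.map_mul_eq_zero _ (hlt.trans_eq (hP.degree_eq n))
  rw [sub_mul, map_sub, sub_eq_zero] at h0
  rw [sq, h0]; ring_nf

theorem map_derivative_mul {n : ℕ} (hn : 1 ≤ n) :
    L (derivative (P n * P (n - 1))) = n * L (P (n - 1) ^ 2) := by
  have hlow : (derivative (P (n - 1))).degree < n :=
    degree_derivative_le.trans_lt
      (by rw [hP.degree_eq]; exact_mod_cast (show n - 1 < n by omega))
  have hdeg : (derivative (P n)).degree = (C (n : ℝ) * P (n - 1)).degree := by
    rw [degree_derivative (by rw [hP.natDegree_eq]; omega), degree_C_mul (by norm_cast; omega),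
      hP.degree_eq, hP.natDegree_eq]
  have hlead := degree_sub_lt_left hdeg (derivative_ne_zero.2 (by rw [hP.natDegree_eq]; omega))
    (by rw [leadingCoeff_derivative, leadingCoeff_mul, leadingCoeff_C, (hP.monic _).leadingCoeff,
      (hP.monic _).leadingCoeff, hP.natDegree_eq]; ring)
  rw [hdeg, degree_C_mul (by norm_cast; omega), hP.degree_eq] at hlead
  have h1 := hP.map_mul_eq_zero _ hlow
  have h2 := hP.map_mul_eq_zero _ hlead
  rw [sub_mul, map_sub, sub_eq_zero, mul_assoc, ← smul_eq_C_mul, map_smul] at h2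
  rw [derivative_mul, map_add, mul_comm (P n), h1, add_zero, h2, sq, smul_eq_mul]

end IsMonicOrthogonal

section ThreeTermRecurrence

variable {P : ℕ → ℝ[X]} {β : ℕ → ℝ}
  (hrec : ∀ n, 1 ≤ n → P (n + 1) = X * P n - C (β n) * P (n - 1))
include hrec

theorem X_mul_eq_add_of_recurrence {n : ℕ} (hn : 1 ≤ n) :
    X * P n = P (n + 1) + C (β n) * P (n - 1) := by
  rw [hrec n hn]; ring

theorem eval_zero_eq_zero_of_odd (hP1 : P 1 = X) {n : ℕ} (hn : Odd n) :
    (P n).eval 0 = 0 := by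
  obtain ⟨k, rfl⟩ := hn
  induction k with
  | zero => simp [hP1]
  | succ k ih =>
    rw [show 2 * (k + 1) + 1 = 2 * k + 1 + 1 + 1 by ring, hrec _ (by omega)]
    simp [ih]

theorem X_mul_divX_mul_pred (hP1 : P 1 = X) {n : ℕ} (hn : 1 ≤ n) :
    X * divX (P n * P (n - 1)) = P n * P (n - 1) := by
  have hcoeff : (P n * P (n - 1)).coeff 0 = 0 := by
    rw [coeff_zero_eq_eval_zero, eval_mul]
    rcases Nat.even_or_odd n with hev | hodd
    · rw [eval_zero_eq_zero_of_odd hrec hP1 (Nat.Even.sub_odd hn hev odd_one), mul_zero]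
    · rw [eval_zero_eq_zero_of_odd hrec hP1 hodd, zero_mul]
  simpa [hcoeff] using X_mul_divX_add (P n * P (n - 1))

theorem divX_mul_succ (hP1 : P 1 = X) {n : ℕ} (hn : 1 ≤ n) :
    divX (P (n + 1) * P n) = P n ^ 2 - C (β n) * divX (P n * P (n - 1)) := by
  refine mul_left_cancel₀ (X_ne_zero (R := ℝ)) ?_
  have h := X_mul_divX_mul_pred hrec hP1 (n := n + 1) (by omega)
  rw [Nat.add_sub_cancel] at h
  rw [h, mul_sub, ← mul_assoc, mul_comm X (C _), mul_assoc, X_mul_divX_mul_pred hrec hP1 hn,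
    hrec n hn]
  ring

end ThreeTermRecurrence

/-- For `Q = X * R`, `(Q ω)' = (freudPearson m lam t R) ω` away from `0`, since
`ω'/ω = (2λ+1)/x + 2tx - 2m x^(2m-1)`. -/
noncomputable def freudPearson (m : ℕ) (lam t : ℝ) (R : ℝ[X]) : ℝ[X] :=
  derivative (X * R) + C (2 * lam + 1) * R +
    (C (2 * t) * X - C (2 * m : ℝ) * X ^ (2 * m - 1)) * (X * R)

namespace IsMonicOrthogonal

variable {L : ℝ[X] →ₗ[ℝ] ℝ} {P : ℕ → ℝ[X]} {β : ℕ → ℝ}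
  (hP : IsMonicOrthogonal L P)
  (hrec : ∀ n, 1 ≤ n → P (n + 1) = X * P n - C (β n) * P (n - 1))
include hP hrec

theorem map_X_mul_of_recurrence {n : ℕ} (hn : 1 ≤ n) :
    L (X * (P n * P (n - 1))) = β n * L (P (n - 1) ^ 2) := by
  rw [← mul_assoc, X_mul_eq_add_of_recurrence hrec hn, add_mul, map_add,
    hP.orthogonal _ _ (by omega), mul_assoc, ← smul_eq_C_mul, map_smul, smul_eq_mul, sq, zero_add]

theorem map_sq_eq_mul_of_recurrence {n : ℕ} (hn : 1 ≤ n) :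
    L (P n ^ 2) = β n * L (P (n - 1) ^ 2) :=
  (hP.map_sq_eq_map_X_mul hn).trans (hP.map_X_mul_of_recurrence hrec hn)

theorem two_mul_map_divX (hP0 : P 0 = 1) (hP1 : P 1 = X) {n : ℕ} (hn : 1 ≤ n) :
    2 * L (divX (P n * P (n - 1))) = (1 - (-1) ^ n) * L (P (n - 1) ^ 2) := by
  induction n, hn using Nat.le_induction with
  | base =>
    have hdivX : divX (X : ℝ[X]) = 1 := by simpa using divX_X_pow (R := ℝ) (n := 1)
    rw [Nat.sub_self, hP0, hP1, mul_one, hdivX, one_pow]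
    norm_num
  | succ n hn ih =>
    rw [Nat.add_sub_cancel, divX_mul_succ hrec hP1 hn, map_sub, ← smul_eq_C_mul, map_smul,
      smul_eq_mul, hP.map_sq_eq_mul_of_recurrence hrec hn, pow_succ (-1 : ℝ)]
    linear_combination (-β n) * ih

theorem map_X_pow_succ_mul (hP0 : P 0 = 1) (hP1 : P 1 = X) (hodd : ∀ j, Odd j → L (X ^ j) = 0)
    (hnorm : ∀ j, L (P j ^ 2) ≠ 0) {k n : ℕ} (hk : Even k) (hn : 1 ≤ n) :
    L (X ^ (k + 1) * (P n * P (n - 1))) = L (P (n - 1) ^ 2) *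
      (1 / L (P (n - 2) ^ 2) * L (X ^ k * (P (n - 2) * P n)) +
        β n / L (P n ^ 2) * L (X ^ k * P n ^ 2)) := by
  have hβ := hP.map_sq_eq_mul_of_recurrence hrec hn
  have hβn : β n ≠ 0 := fun h0 => hnorm n (by rw [hβ, h0, zero_mul])
  rcases hn.eq_or_lt with rfl | hn2
  · -- `1 - 2 = 0` in `ℕ`, so the first term is the odd moment `L (X ^ (k + 1))`.
    have hA : L (X ^ k * (P (1 - 2) * P 1)) = 0 := by
      simpa [hP0, hP1, pow_succ] using hodd (k + 1) hk.add_one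
    rw [hA, hβ]
    have h0 : L 1 ≠ 0 := by simpa [hP0] using hnorm 0
    simp only [Nat.sub_self, hP0, hP1, one_pow]
    field_simp
    ring_nf
  · have h1 : L (P (n - 1) ^ 2) = β (n - 1) * L (P (n - 2) ^ 2) := by
      simpa [Nat.sub_sub] using hP.map_sq_eq_mul_of_recurrence hrec (n := n - 1) (by omega)
    have hβn1 : β (n - 1) ≠ 0 := fun h0 => hnorm (n - 1) (by rw [h1, h0, zero_mul])
    have hX : X * P (n - 1) = P n + C (β (n - 1)) * P (n - 2) := by
      simpa [Nat.sub_add_cancel hn2.le, Nat.sub_sub] using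
        X_mul_eq_add_of_recurrence hrec (n := n - 1) (by omega)
    have hsplit : X ^ (k + 1) * (P n * P (n - 1)) =
        X ^ k * P n ^ 2 + β (n - 1) • (X ^ k * (P (n - 2) * P n)) := by
      rw [pow_succ, smul_eq_C_mul]; linear_combination (X ^ k * P n) * hX
    rw [hsplit, map_add, map_smul, smul_eq_mul, hβ, h1]
    field_simp [hnorm (n - 2)]
    ring

theorem string_equation_of_pearson (hP0 : P 0 = 1) (hP1 : P 1 = X)
    (hodd : ∀ j, Odd j → L (X ^ j) = 0) (hnorm : ∀ j, L (P j ^ 2) ≠ 0) {m : ℕ}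
    (hm : 1 ≤ m) {lam t : ℝ} (hpearson : ∀ R, L (freudPearson m lam t R) = 0) {n : ℕ}
    (hn : 1 ≤ n) :
    2 * (m : ℝ) * (1 / L (P (n - 2) ^ 2) * L (X ^ (2 * m - 2) * (P (n - 2) * P n)) +
        β n / L (P n ^ 2) * L (X ^ (2 * m - 2) * P n ^ 2)) - 2 * t * β n =
      n + (lam + 1 / 2) * (1 - (-1) ^ n) := by
  have hpear := hpearson (divX (P n * P (n - 1)))
  rw [freudPearson, X_mul_divX_mul_pred hrec hP1 hn, sub_mul, mul_assoc, mul_assoc,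
    ← smul_eq_C_mul, ← smul_eq_C_mul, ← smul_eq_C_mul, map_add, map_add, map_sub, map_smul,
    map_smul, map_smul, smul_eq_mul, smul_eq_mul, smul_eq_mul, hP.map_derivative_mul hn,
    hP.map_X_mul_of_recurrence hrec hn, ← show 2 * m - 2 + 1 = 2 * m - 1 by omega,
    hP.map_X_pow_succ_mul hrec hP0 hP1 hodd hnorm ⟨m - 1, by omega⟩ hn] at hpear
  apply mul_left_cancel₀ (hnorm (n - 1))
  linear_combination (-1) * hpear + (lam + 1 / 2) * hP.two_mul_map_divX hrec hP0 hP1 hn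

end IsMonicOrthogonal

theorem freudWeight_neg (m : ℕ) (lam t x : ℝ) :
    freudWeight m lam t (-x) = freudWeight m lam t x := by
  rw [freudWeight, freudWeight, abs_neg, neg_sq, Even.neg_pow ⟨m, two_mul m⟩]

theorem freudWeight_nonneg (m : ℕ) (lam t x : ℝ) : 0 ≤ freudWeight m lam t x :=
  mul_nonneg (Real.rpow_nonneg (abs_nonneg x) _) (exp_pos _).le

theorem freudWeight_pos_ae (m : ℕ) (lam t : ℝ) : ∀ᵐ x, 0 < freudWeight m lam t x := by
  filter_upwards [(countable_singleton (0 : ℝ)).ae_notMem volume] with x hx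
  exact mul_pos (Real.rpow_pos_of_pos (abs_pos.2 hx) _) (exp_pos _)

theorem hasDerivAt_abs_rpow_of_ne_zero {x : ℝ} (hx : x ≠ 0) (p : ℝ) :
    HasDerivAt (fun y : ℝ => |y| ^ p) (p * |x| ^ p / x) x := by
  refine ((Real.hasDerivAt_rpow_const (p := p) (Or.inl (abs_ne_zero.2 hx))).comp x
    (hasDerivAt_abs hx)).congr_deriv ?_
  rw [Real.rpow_sub_one (abs_ne_zero.2 hx)]
  rcases hx.lt_or_gt with hneg | hpos
  · rw [sign_neg hneg, abs_of_neg hneg]; field_simp; simp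
  · rw [sign_pos hpos, abs_of_pos hpos]; field_simp; simp

theorem hasDerivAt_eval_X_mul_mul_freudWeight {m : ℕ} (lam t : ℝ) (R : ℝ[X])
    {x : ℝ} (hx : x ≠ 0) :
    HasDerivAt (fun y => (X * R).eval y * freudWeight m lam t y)
      ((freudPearson m lam t R).eval x * freudWeight m lam t x) x := by
  have hE : HasDerivAt (fun y => t * y ^ 2 - y ^ (2 * m))
      (t * (2 * x) - (2 * m : ℕ) * x ^ (2 * m - 1)) x := by
    refine (((hasDerivAt_pow 2 x).const_mul t).sub (hasDerivAt_pow (2 * m) x)).congr_deriv ?_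
    simp
  refine (((X * R).hasDerivAt x).mul
    ((hasDerivAt_abs_rpow_of_ne_zero hx (2 * lam + 1)).mul hE.exp)).congr_deriv ?_
  simp only [freudPearson, freudWeight, Pi.mul_apply, eval_add, eval_mul, eval_sub, eval_C,
    eval_X, eval_pow]
  field_simp
  push_cast
  ring

theorem tendsto_eval_mul_exp_atTop {m : ℕ} (hm : 2 ≤ m) (s : ℝ) (p : ℝ[X]) :
    Tendsto (fun x => p.eval x * exp (s * x ^ 2 - x ^ (2 * m))) atTop (𝓝 0) := by
  refine squeeze_zero_norm' ?_ (by simpa using (p.tendsto_div_exp_atTop).abs)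
  filter_upwards [eventually_ge_atTop (|s| + 1)] with x hx
  have hx1 : 1 ≤ x := by linarith [abs_nonneg s]
  have hpow : x ^ 4 ≤ x ^ (2 * m) := pow_le_pow_right₀ hx1 (by omega)
  have hexp : s * x ^ 2 - x ^ (2 * m) ≤ -x := by
    nlinarith [le_abs_self s, mul_nonneg (mul_nonneg (sub_nonneg.2 hx1) (by linarith : 0 ≤ x))
      (by positivity : (0:ℝ) ≤ x ^ 2 + 1)]
  rw [norm_mul, norm_of_nonneg (exp_pos _).le, abs_div, abs_of_pos (exp_pos x), div_eq_mul_inv,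
    ← exp_neg, Real.norm_eq_abs]
  gcongr

theorem tendsto_eval_mul_exp_cocompact {m : ℕ} (hm : 2 ≤ m) (s : ℝ) (p : ℝ[X]) :
    Tendsto (fun x => p.eval x * exp (s * x ^ 2 - x ^ (2 * m))) (cocompact ℝ) (𝓝 0) := by
  rw [cocompact_eq_atBot_atTop]
  refine (Tendsto.sup ?_ (tendsto_eval_mul_exp_atTop hm s p))
  have hneg := (tendsto_eval_mul_exp_atTop hm s (p.comp (-X))).comp tendsto_neg_atBot_atTop
  refine hneg.congr fun x => ?_
  simp [Even.neg_pow ⟨m, two_mul m⟩]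

theorem exists_abs_eval_mul_exp_le {m : ℕ} (hm : 2 ≤ m) (s : ℝ) (p : ℝ[X]) :
    ∃ C, ∀ x, |p.eval x * exp (s * x ^ 2 - x ^ (2 * m))| ≤ C := by
  have hcont : Continuous fun x => p.eval x * exp (s * x ^ 2 - x ^ (2 * m)) := by fun_prop
  obtain ⟨C, hC⟩ := isBounded_iff_forall_norm_le.1 <| hcont.isBounded_range_iff_isBigO.2
    ((tendsto_eval_mul_exp_cocompact hm s p).isBigO_one ℝ)
  exact ⟨C, fun x => hC _ (mem_range_self x)⟩

theorem integrable_abs_rpow_mul_exp_neg_sq {s : ℝ} (hs : -1 < s) :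
    Integrable fun x : ℝ => |x| ^ s * exp (-x ^ 2) := by
  have hIoi : IntegrableOn (fun x : ℝ => |x| ^ s * exp (-x ^ 2)) (Ioi 0) := by
    refine (integrableOn_rpow_mul_exp_neg_mul_sq one_pos hs).congr_fun (fun x hx => ?_)
      measurableSet_Ioi
    simp [abs_of_pos (mem_Ioi.1 hx)]
  have hIic : IntegrableOn (fun x : ℝ => |x| ^ s * exp (-x ^ 2)) (Iic 0) := by
    rw [← (Measure.measurePreserving_neg (volume : Measure ℝ)).integrableOn_comp_preimage
      (Homeomorph.neg ℝ).measurableEmbedding, neg_preimage, neg_Iic, neg_zero,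
      integrableOn_Ici_iff_integrableOn_Ioi]
    simpa [Function.comp_def] using hIoi
  rw [← integrableOn_univ, ← Iic_union_Ioi (a := (0:ℝ))]
  exact hIic.union hIoi

theorem integrable_eval_mul_freudWeight {m : ℕ} (hm : 2 ≤ m) {lam : ℝ} (hlam : -1 < lam)
    (t : ℝ) (p : ℝ[X]) : Integrable fun x => p.eval x * freudWeight m lam t x := by
  obtain ⟨C, hC⟩ := exists_abs_eval_mul_exp_le hm (t + 1) p
  refine ((integrable_abs_rpow_mul_exp_neg_sq (by linarith : -1 < 2 * lam + 1)).bdd_mul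
    (c := C) (by fun_prop) (Eventually.of_forall hC)).congr
    (Eventually.of_forall fun x => ?_)
  simp only [freudWeight]
  rw [show t * x ^ 2 - x ^ (2 * m) = ((t + 1) * x ^ 2 - x ^ (2 * m)) + -x ^ 2 by ring, exp_add]
  ring

theorem tendsto_eval_mul_freudWeight_cocompact {m : ℕ} (hm : 2 ≤ m) (lam t : ℝ) (p : ℝ[X]) :
    Tendsto (fun x => p.eval x * freudWeight m lam t x) (cocompact ℝ) (𝓝 0) := by
  obtain ⟨k, hk⟩ : ∃ k : ℕ, 2 * lam + 1 ≤ k := ⟨⌈2 * lam + 1⌉₊, Nat.le_ceil _⟩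
  have hdom := (tendsto_eval_mul_exp_cocompact hm t (p * X ^ k)).abs
  rw [abs_zero] at hdom
  refine squeeze_zero_norm' ?_ hdom
  filter_upwards [(isCompact_closedBall (0 : ℝ) 1).compl_mem_cocompact] with x hx
  have hx1 : 1 ≤ |x| := by simpa using (not_le.1 (mt Metric.mem_closedBall.2 hx)).le
  have hpow : |x| ^ (2 * lam + 1) ≤ |x| ^ k := by
    rw [← Real.rpow_natCast]; exact Real.rpow_le_rpow_of_exponent_le hx1 hk
  calc ‖p.eval x * freudWeight m lam t x‖
      = |p.eval x| * (|x| ^ (2 * lam + 1) * exp (t * x ^ 2 - x ^ (2 * m))) := by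
        rw [freudWeight, norm_mul, Real.norm_eq_abs, Real.norm_eq_abs, abs_mul,
          abs_of_nonneg (Real.rpow_nonneg (abs_nonneg x) _), abs_of_pos (exp_pos _)]
    _ ≤ |p.eval x| * (|x| ^ k * exp (t * x ^ 2 - x ^ (2 * m))) := by gcongr
    _ = _ := by
        rw [eval_mul, eval_pow, eval_X, abs_mul, abs_mul, abs_pow,
          abs_of_pos (exp_pos _), mul_assoc]

theorem tendsto_eval_X_mul_mul_freudWeight_nhds_zero {lam : ℝ} (hlam : -1 < lam) (m : ℕ)
    (t : ℝ) (R : ℝ[X]) :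
    Tendsto (fun x => (X * R).eval x * freudWeight m lam t x) (𝓝 0) (𝓝 0) := by
  have hg :
      Continuous fun x => |R.eval x| * |x| ^ (2 * lam + 2) * exp (t * x ^ 2 - x ^ (2 * m)) :=
    (R.continuous.abs.mul (continuous_abs.rpow_const fun _ => Or.inr (by linarith))).mul
      (by fun_prop)
  refine squeeze_zero_norm (fun x => le_of_eq ?_)
    (by simpa [Real.zero_rpow (by linarith : 2 * lam + 2 ≠ 0)] using hg.tendsto 0)
  rw [show 2 * lam + 2 = 2 * lam + 1 + 1 by ring,
    Real.rpow_add_one' (abs_nonneg x) (by linarith)]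
  simp only [freudWeight, eval_mul, eval_X, norm_mul, Real.norm_eq_abs, abs_of_pos (exp_pos _),
    abs_of_nonneg (Real.rpow_nonneg (abs_nonneg x) _)]
  ring

theorem integral_freudPearson_mul_freudWeight {m : ℕ} (hm : 2 ≤ m) {lam : ℝ} (hlam : -1 < lam)
    (t : ℝ) (R : ℝ[X]) :
    ∫ x, (freudPearson m lam t R).eval x * freudWeight m lam t x = 0 := by
  set F := fun x => (X * R).eval x * freudWeight m lam t x
  have hF0 : F 0 = 0 := by simp [F]
  have hcont : ContinuousAt F 0 := by
    rw [ContinuousAt, hF0]; exact tendsto_eval_X_mul_mul_freudWeight_nhds_zero hlam m t R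
  have hderiv :
      ∀ x ≠ 0, HasDerivAt F ((freudPearson m lam t R).eval x * freudWeight m lam t x) x :=
    fun x hx => hasDerivAt_eval_X_mul_mul_freudWeight lam t R hx
  have hint := integrable_eval_mul_freudWeight hm hlam t (freudPearson m lam t R)
  have hF := tendsto_eval_mul_freudWeight_cocompact hm lam t (X * R)
  have hIic := integral_Iic_of_hasDerivAt_of_tendsto hcont.continuousWithinAt
    (fun x hx => hderiv x (ne_of_lt hx)) hint.integrableOn (hF.mono_left atBot_le_cocompact)
  have hIoi := integral_Ioi_of_hasDerivAt_of_tendsto hcont.continuousWithinAt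
    (fun x hx => hderiv x (ne_of_gt hx)) hint.integrableOn (hF.mono_left atTop_le_cocompact)
  rw [← intervalIntegral.integral_Iic_add_Ioi hint.integrableOn hint.integrableOn, hIic, hIoi,
    hF0, sub_self, add_zero]

theorem discrete_string_equation_general (m : ℕ) (hm : 2 ≤ m) (lam t : ℝ) (hlam : -1 < lam)
    (P : ℕ → Polynomial ℝ) (β : ℕ → ℝ) (h : ℕ → ℝ)
    (hmonic : ∀ n, (P n).Monic) (hdeg : ∀ n, (P n).natDegree = n)
    (horth : ∀ j k, j ≠ k →
      ∫ x : ℝ, (P j).eval x * (P k).eval x * freudWeight m lam t x = 0)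
    (hP0 : P 0 = 1) (hP1 : P 1 = X)
    (hrec : ∀ n, 1 ≤ n → P (n + 1) = X * P n - C (β n) * P (n - 1))
    (hh : ∀ n, h n = ∫ x : ℝ, ((P n).eval x) ^ 2 * freudWeight m lam t x) :
    ∀ n : ℕ, 1 ≤ n →
      2 * (m : ℝ) *
          ((1 / h (n - 2)) *
              (∫ x : ℝ, x ^ (2 * m - 2) * ((P (n - 2)).eval x * (P n).eval x) *
                freudWeight m lam t x) +
            (β n / h n) *
              (∫ x : ℝ, x ^ (2 * m - 2) * ((P n).eval x) ^ 2 * freudWeight m lam t x))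
        - 2 * t * β n = (n : ℝ) + (lam + 1 / 2) * (1 - (-1 : ℝ) ^ n) := by
  intro n hn
  set L := momentFunctional (freudWeight m lam t) (integrable_eval_mul_freudWeight hm hlam t)
  have hP : IsMonicOrthogonal L P :=
    ⟨hmonic, hdeg, fun j k hjk => by simpa [L, momentFunctional_apply] using horth j k hjk⟩
  have hnorm : ∀ k, h k = L (P k ^ 2) := fun k => by simp [L, momentFunctional_apply, hh]
  have key := hP.string_equation_of_pearson hrec hP0 hP1
    (fun j hj => momentFunctional_X_pow_of_odd _ (freudWeight_neg m lam t) hj)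
    (fun j => (momentFunctional_sq_pos _ (freudWeight_nonneg m lam t)
      (freudWeight_pos_ae m lam t) (hmonic j).ne_zero).ne')
    (by omega) (integral_freudPearson_mul_freudWeight hm hlam t) hn
  simpa [hnorm, L, momentFunctional_apply, mul_assoc] using key

/-- For `λ > −1`, `t ∈ ℝ` and integer `m ≥ 2`, with
`V_n^{(2m)} = (1/h_{n−2}) ∫ x^{2m−2} P_{n−2} P_n ω dx + (β_n/h_n) ∫ x^{2m−2} P_n² ω dx`,
the recurrence coefficients of the monic orthogonal polynomials of the generalised higher
order Freud weight satisfy the discrete string equation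
`2m V_n^{(2m)} − 2t β_n = n + (λ + 1/2)(1 − (−1)ⁿ)` for all `n ≥ 1`. -/
theorem discrete_string_equation (m : ℕ) (hm : 2 ≤ m) (lam t : ℝ) (hlam : -1 < lam)
    (P : ℕ → Polynomial ℝ) (β : ℕ → ℝ) (h : ℕ → ℝ)
    (hmonic : ∀ n, (P n).Monic) (hdeg : ∀ n, (P n).natDegree = n)
    (horth : ∀ j k, j ≠ k →
      ∫ x : ℝ, (P j).eval x * (P k).eval x * freudWeight m lam t x = 0)
    (hβpos : ∀ n, 1 ≤ n → 0 < β n)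
    (hP0 : P 0 = 1) (hP1 : P 1 = X)
    (hrec : ∀ n, 1 ≤ n → P (n + 1) = X * P n - C (β n) * P (n - 1))
    (hh : ∀ n, h n = ∫ x : ℝ, ((P n).eval x) ^ 2 * freudWeight m lam t x) :
    ∀ n : ℕ, 1 ≤ n →
      2 * (m : ℝ) *
          ((1 / h (n - 2)) *
              (∫ x : ℝ, x ^ (2 * m - 2) * ((P (n - 2)).eval x * (P n).eval x) *
                freudWeight m lam t x) +
            (β n / h n) *
              (∫ x : ℝ, x ^ (2 * m - 2) * ((P n).eval x) ^ 2 * freudWeight m lam t x))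
        - 2 * t * β n = (n : ℝ) + (lam + 1 / 2) * (1 - (-1 : ℝ) ^ n) :=
  discrete_string_equation_general m hm lam t hlam P β h hmonic hdeg horth hP0 hP1 hrec hh
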